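/- arXiv:2201.11447 — 4 statements merged into one kernel-verified Lean document; each statement's English description precedes it below -/
import Mathlib

section
/- Let D be a digraph, let ε, δ > 0 and let n ≥ 1. Suppose there is a 3-colored complete graph G on n vertices which contains a collection of at least ε·n² pairwise pair-disjoint copies of C(D), but at most δ·n^{v(D)} copies of C(D) in total. Then there is a digraph G' on n vertices which contains a collection of at least ε·n² pairwise pair-disjoint induced copies of D, but at most δ·n^{v(D)} induced copies of D in total. -/
/-- A `k`-colored complete graph on vertex set `Fin n`: a symmetric assignment of a
color in `Fin k` to each pair of vertices (the diagonal values are irrelevant). -/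
def IsColoring {n k : ℕ} (G : Fin n → Fin n → Fin k) : Prop :=
  ∀ u v : Fin n, G u v = G v u

/-- `φ` is a copy of the `k`-colored complete graph `F` in `G`: an injection of the
vertices preserving all edge colors. -/
def IsCopy {m n k : ℕ} (F : Fin m → Fin m → Fin k) (G : Fin n → Fin n → Fin k)
    (φ : Fin m → Fin n) : Prop :=
  Function.Injective φ ∧ ∀ u v : Fin m, u ≠ v → G (φ u) (φ v) = F u v

/-- The number of copies of `F` in `G`. -/
noncomputable def copyCount {m n k : ℕ} (F : Fin m → Fin m → Fin k)
    (G : Fin n → Fin n → Fin k) : ℕ :=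
  Nat.card {φ : Fin m → Fin n // IsCopy F G φ}

/-- A family of pairwise pair-disjoint copies: any two distinct members share at most
one vertex. -/
def PairDisjointFamily {m n : ℕ} (Φ : Finset (Fin m → Fin n)) : Prop :=
  ∀ φ ∈ Φ, ∀ ψ ∈ Φ, φ ≠ ψ → (Set.range φ ∩ Set.range ψ).ncard ≤ 1

/-- `G` contains a collection of at least `t` pairwise pair-disjoint copies of `F`. -/
def HasDisjointCopies {m n k : ℕ} (F : Fin m → Fin m → Fin k)
    (G : Fin n → Fin n → Fin k) (t : ℝ) : Prop :=
  ∃ Φ : Finset (Fin m → Fin n), t ≤ (Φ.card : ℝ) ∧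
    (∀ φ ∈ Φ, IsCopy F G φ) ∧ PairDisjointFamily Φ

/-- The number of (unordered) edges whose colors differ between `G` and `G'`. -/
noncomputable def changedEdges {n k : ℕ} (G G' : Fin n → Fin n → Fin k) : ℕ :=
  Nat.card {p : Fin n × Fin n // p.1 < p.2 ∧ G p.1 p.2 ≠ G' p.1 p.2}

/-- A digraph on `Fin n`: an irreflexive (boolean) edge relation. Anti-parallel edges
are allowed, but no loops. -/
def IsDigraph {n : ℕ} (E : Fin n → Fin n → Bool) : Prop :=
  ∀ v : Fin n, E v v = false

/-- `φ` is an induced copy of the digraph `D` in the digraph `G`. -/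
def IsInducedCopy {m n : ℕ} (D : Fin m → Fin m → Bool) (G : Fin n → Fin n → Bool)
    (φ : Fin m → Fin n) : Prop :=
  Function.Injective φ ∧ ∀ u v : Fin m, u ≠ v → G (φ u) (φ v) = D u v

/-- The number of induced copies of `D` in `G`. -/
noncomputable def inducedCopyCount {m n : ℕ} (D : Fin m → Fin m → Bool)
    (G : Fin n → Fin n → Bool) : ℕ :=
  Nat.card {φ : Fin m → Fin n // IsInducedCopy D G φ}

/-- `G` contains a collection of at least `t` pairwise pair-disjoint induced copies
of `D`. -/
def HasDisjointInducedCopies {m n : ℕ} (D : Fin m → Fin m → Bool)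
    (G : Fin n → Fin n → Bool) (t : ℝ) : Prop :=
  ∃ Φ : Finset (Fin m → Fin n), t ≤ (Φ.card : ℝ) ∧
    (∀ φ ∈ Φ, IsInducedCopy D G φ) ∧ PairDisjointFamily Φ

/-- The number of directed edges that must be added/deleted to turn `G` into `G'`. -/
noncomputable def changedArcs {n : ℕ} (G G' : Fin n → Fin n → Bool) : ℕ :=
  Nat.card {p : Fin n × Fin n // G p.1 p.2 ≠ G' p.1 p.2}

/-- Induced `D`-freeness is easily testable: there are constants `c, C > 0` such that
for every `ε ∈ (0,1)`, every digraph `G` on `n` vertices with at most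
`c · ε^C · n^(v D)` induced copies of `D` can be made induced `D`-free by
adding/deleting at most `ε · n²` directed edges. -/
def EasilyTestableDigraph {m : ℕ} (D : Fin m → Fin m → Bool) : Prop :=
  ∃ c C : ℝ, 0 < c ∧ 0 < C ∧ ∀ ε : ℝ, 0 < ε → ε < 1 → ∀ n : ℕ,
    ∀ G : Fin n → Fin n → Bool, IsDigraph G →
      (inducedCopyCount D G : ℝ) ≤ c * ε ^ C * (n : ℝ) ^ m →
      ∃ G' : Fin n → Fin n → Bool, IsDigraph G' ∧
        (∀ φ : Fin m → Fin n, ¬ IsInducedCopy D G' φ) ∧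
        (changedArcs G G' : ℝ) ≤ ε * (n : ℝ) ^ 2

/-- The 3-colored complete graph `C(D)` associated to a digraph `D`: the color of a
pair `{u,v}` is the number of directed edges of `D` between `u` and `v` (0, 1 or 2). -/
def CD {m : ℕ} (D : Fin m → Fin m → Bool) : Fin m → Fin m → Fin 3 :=
  fun u v => (if D u v then 1 else 0) + (if D v u then 1 else 0)

/-! Orient each pair covered by a copy `ψ` of `C(D)` from the pair-disjoint family as `D` does
through `ψ`; this is well defined because two members of the family share at most one vertex.
Realise every other pair of color `c` by `c` arcs. The resulting digraph `G'` has `C(G') = G`,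
so its induced copies of `D` are copies of `C(D)` in `G`, while every member of the family
becomes an induced copy of `D`. -/

section

variable {m n : ℕ}

lemma CD_apply_of_eq {D : Fin m → Fin m → Bool} {H : Fin n → Fin n → Bool} {a b : Fin m}
    {x y : Fin n} (hxy : H x y = D a b) (hyx : H y x = D b a) : CD H x y = CD D a b := by
  simp only [CD, hxy, hyx]

lemma IsInducedCopy.isCopy_CD {D : Fin m → Fin m → Bool} {H : Fin n → Fin n → Bool}
    {G : Fin n → Fin n → Fin 3} (hHG : ∀ x y, x ≠ y → CD H x y = G x y)
    {φ : Fin m → Fin n} (hφ : IsInducedCopy D H φ) : IsCopy (CD D) G φ := by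
  refine ⟨hφ.1, fun u v huv => ?_⟩
  rw [← hHG _ _ (hφ.1.ne huv)]
  exact CD_apply_of_eq (hφ.2 u v huv) (hφ.2 v u huv.symm)

lemma inducedCopyCount_le_copyCount {D : Fin m → Fin m → Bool} {H : Fin n → Fin n → Bool}
    {G : Fin n → Fin n → Fin 3} (hHG : ∀ x y, x ≠ y → CD H x y = G x y) :
    inducedCopyCount D H ≤ copyCount (CD D) G :=
  Nat.card_le_card_of_injective _
    (Subtype.impEmbedding _ _ fun _ => IsInducedCopy.isCopy_CD hHG).injective

def orientColoring (G : Fin n → Fin n → Fin 3) (x y : Fin n) : Bool :=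
  decide (x ≠ y ∧ (G x y = 2 ∨ G x y = 1 ∧ x < y))

lemma isDigraph_orientColoring (G : Fin n → Fin n → Fin 3) : IsDigraph (orientColoring G) := by
  simp [IsDigraph, orientColoring]

lemma CD_orientColoring {G : Fin n → Fin n → Fin 3} (hG : IsColoring G) {x y : Fin n}
    (hxy : x ≠ y) : CD (orientColoring G) x y = G x y := by
  have hc : G x y = 0 ∨ G x y = 1 ∨ G x y = 2 := by omega
  rcases hxy.lt_or_gt with h | h <;> rcases hc with hc | hc | hc <;>
    simp [CD, orientColoring, hG y x, hc, h, h.ne, h.ne', not_lt_of_gt h]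

lemma PairDisjointFamily.eq_of_apply_eq_apply {Φ : Finset (Fin m → Fin n)}
    (hΦ : PairDisjointFamily Φ) {ψ ψ' : Fin m → Fin n} (hψ : ψ ∈ Φ) (hψ' : ψ' ∈ Φ)
    {a b a' b' : Fin m} (hab : ψ a ≠ ψ b) (ha : ψ a = ψ' a') (hb : ψ b = ψ' b') : ψ = ψ' := by
  by_contra hne
  have hpair : ({ψ a, ψ b} : Set (Fin n)) ⊆ Set.range ψ ∩ Set.range ψ' := by
    rintro x (rfl | rfl)
    · exact ⟨⟨a, rfl⟩, ⟨a', ha.symm⟩⟩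
    · exact ⟨⟨b, rfl⟩, ⟨b', hb.symm⟩⟩
  have := Set.ncard_le_ncard hpair ((Set.finite_range ψ).inter_of_left _)
  rw [Set.ncard_pair hab] at this
  have := hΦ ψ hψ ψ' hψ' hne
  omega

def CoveredBy (Φ : Finset (Fin m → Fin n)) (x y : Fin n) : Prop :=
  ∃ t : (Fin m → Fin n) × Fin m × Fin m, t.1 ∈ Φ ∧ t.2.1 ≠ t.2.2 ∧ t.1 t.2.1 = x ∧ t.1 t.2.2 = y

lemma CoveredBy.symm {Φ : Finset (Fin m → Fin n)} {x y : Fin n} :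
    CoveredBy Φ x y → CoveredBy Φ y x := by
  rintro ⟨⟨ψ, a, b⟩, hψ, hab, rfl, rfl⟩
  exact ⟨⟨ψ, b, a⟩, hψ, hab.symm, rfl, rfl⟩

noncomputable def orientAlong (D : Fin m → Fin m → Bool) (Φ : Finset (Fin m → Fin n))
    (H : Fin n → Fin n → Bool) (x y : Fin n) : Bool :=
  open Classical in
  if h : CoveredBy Φ x y then D h.choose.2.1 h.choose.2.2 else H x y

variable {D : Fin m → Fin m → Bool} {Φ : Finset (Fin m → Fin n)} {H : Fin n → Fin n → Bool}

lemma orientAlong_of_not_coveredBy {x y : Fin n} (h : ¬ CoveredBy Φ x y) :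
    orientAlong D Φ H x y = H x y := by
  simp [orientAlong, h]

lemma orientAlong_apply (hinj : ∀ ψ ∈ Φ, Function.Injective ψ) (hΦ : PairDisjointFamily Φ)
    {ψ : Fin m → Fin n} (hψ : ψ ∈ Φ) {a b : Fin m} (hab : a ≠ b) :
    orientAlong D Φ H (ψ a) (ψ b) = D a b := by
  have hcov : CoveredBy Φ (ψ a) (ψ b) := ⟨⟨ψ, a, b⟩, hψ, hab, rfl, rfl⟩
  rw [orientAlong, dif_pos hcov]
  obtain ⟨hmem, -, ha, hb⟩ := hcov.choose_spec
  generalize hcov.choose = t at hmem ha hb ⊢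
  obtain ⟨ψ', a', b'⟩ := t
  obtain rfl : ψ = ψ' := hΦ.eq_of_apply_eq_apply hψ hmem ((hinj ψ hψ).ne hab) ha.symm hb.symm
  rw [hinj ψ hψ ha, hinj ψ hψ hb]

lemma isDigraph_orientAlong (hinj : ∀ ψ ∈ Φ, Function.Injective ψ) (hH : IsDigraph H) :
    IsDigraph (orientAlong D Φ H) := by
  intro v
  have hcov : ¬ CoveredBy Φ v v := by
    rintro ⟨⟨ψ, a, b⟩, hψ, hab, ha, hb⟩
    exact (hinj ψ hψ).ne hab (ha.trans hb.symm)
  rw [orientAlong_of_not_coveredBy hcov, hH v]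

lemma CD_orientAlong {G : Fin n → Fin n → Fin 3} (hcopy : ∀ ψ ∈ Φ, IsCopy (CD D) G ψ)
    (hΦ : PairDisjointFamily Φ) (hHG : ∀ x y, x ≠ y → CD H x y = G x y) {x y : Fin n}
    (hxy : x ≠ y) : CD (orientAlong D Φ H) x y = G x y := by
  have hinj : ∀ ψ ∈ Φ, Function.Injective ψ := fun ψ hψ => (hcopy ψ hψ).1
  by_cases hcov : CoveredBy Φ x y
  · obtain ⟨⟨ψ, a, b⟩, hψ, hab, rfl, rfl⟩ := hcov
    rw [(hcopy ψ hψ).2 a b hab]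
    exact CD_apply_of_eq (orientAlong_apply hinj hΦ hψ hab) (orientAlong_apply hinj hΦ hψ hab.symm)
  · have hcov' : ¬ CoveredBy Φ y x := fun h => hcov h.symm
    rw [← hHG x y hxy]
    simp only [CD, orientAlong_of_not_coveredBy hcov, orientAlong_of_not_coveredBy hcov']

end

theorem colored_hardness_to_digraph_hardness_general {m : ℕ} (D : Fin m → Fin m → Bool)
    (ε δ : ℝ) (n : ℕ)
    (G : Fin n → Fin n → Fin 3) (hG : IsColoring G)
    (hdisj : HasDisjointCopies (CD D) G (ε * (n : ℝ) ^ 2))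
    (hcount : (copyCount (CD D) G : ℝ) ≤ δ * (n : ℝ) ^ m) :
    ∃ G' : Fin n → Fin n → Bool, IsDigraph G' ∧
      HasDisjointInducedCopies D G' (ε * (n : ℝ) ^ 2) ∧
      (inducedCopyCount D G' : ℝ) ≤ δ * (n : ℝ) ^ m := by
  obtain ⟨Φ, hcard, hcopy, hΦ⟩ := hdisj
  have hinj : ∀ ψ ∈ Φ, Function.Injective ψ := fun ψ hψ => (hcopy ψ hψ).1
  have hCD : ∀ x y, x ≠ y → CD (orientAlong D Φ (orientColoring G)) x y = G x y :=
    fun _ _ => CD_orientAlong hcopy hΦ (fun _ _ => CD_orientColoring hG)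
  refine ⟨orientAlong D Φ (orientColoring G),
    isDigraph_orientAlong hinj (isDigraph_orientColoring G),
    ⟨Φ, hcard, fun ψ hψ => ⟨hinj ψ hψ, fun _ _ => orientAlong_apply hinj hΦ hψ⟩, hΦ⟩, ?_⟩
  calc (inducedCopyCount D (orientAlong D Φ (orientColoring G)) : ℝ)
      ≤ copyCount (CD D) G := by exact_mod_cast inducedCopyCount_le_copyCount (D := D) hCD
    _ ≤ δ * (n : ℝ) ^ m := hcount

/-- If there is a 3-colored complete graph `G` on `n` vertices with at
least `ε·n²` pair-disjoint copies of `C(D)` but at most `δ·n^(v D)` copies of `C(D)`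
in total, then there is a digraph `G'` on `n` vertices with at least `ε·n²`
pair-disjoint induced copies of `D` but at most `δ·n^(v D)` induced copies of `D`
in total. -/
theorem colored_hardness_to_digraph_hardness {m : ℕ} (D : Fin m → Fin m → Bool)
    (hD : IsDigraph D) (ε δ : ℝ) (hε : 0 < ε) (hδ : 0 < δ) (n : ℕ) (hn : 1 ≤ n)
    (G : Fin n → Fin n → Fin 3) (hG : IsColoring G)
    (hdisj : HasDisjointCopies (CD D) G (ε * (n : ℝ) ^ 2))
    (hcount : (copyCount (CD D) G : ℝ) ≤ δ * (n : ℝ) ^ m) :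
    ∃ G' : Fin n → Fin n → Bool, IsDigraph G' ∧
      HasDisjointInducedCopies D G' (ε * (n : ℝ) ^ 2) ∧
      (inducedCopyCount D G' : ℝ) ≤ δ * (n : ℝ) ^ m :=
  colored_hardness_to_digraph_hardness_general D ε δ n G hG hdisj hcount
end

section
/- If G is a 3-colored complete graph with at least 2 vertices and with no rainbow triangles, then there exist two distinct colors a, b ∈ {1,2,3} and a partition of V(G) into at least two nonempty parts which is (a,b)-monochromatic. -/
/-- `u, v, w` form a rainbow triangle in the 3-colored complete graph `G`: they are
distinct and their three connecting edges receive three distinct colors. -/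
def IsRainbow {n : ℕ} (G : Fin n → Fin n → Fin 3) (u v w : Fin n) : Prop :=
  u ≠ v ∧ u ≠ w ∧ v ≠ w ∧ G u v ≠ G u w ∧ G u v ≠ G v w ∧ G u w ≠ G v w

/-- The number of rainbow triangles (as vertex sets) in `G`. -/
noncomputable def rainbowCount {n : ℕ} (G : Fin n → Fin n → Fin 3) : ℕ :=
  Nat.card {t : Fin n × Fin n × Fin n //
    t.1 < t.2.1 ∧ t.2.1 < t.2.2 ∧ IsRainbow G t.1 t.2.1 t.2.2}

/-- A partition `P` of the vertex set of `G` is `(a,b)`-monochromatic if for any two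
distinct parts `X, Y`, all edges between `X` and `Y` have the same color, and this
color is `a` or `b`. -/
def IsMonoPartition {n : ℕ} (G : Fin n → Fin n → Fin 3) (a b : Fin 3)
    (P : Finpartition (Finset.univ : Finset (Fin n))) : Prop :=
  ∀ X ∈ P.parts, ∀ Y ∈ P.parts, X ≠ Y →
    ∃ c : Fin 3, (c = a ∨ c = b) ∧ ∀ x ∈ X, ∀ y ∈ Y, G x y = c


open Finset

section ColorReach

variable {V C : Type*}

-- The diagonal of `G` is junk, but loops do not change reachability.
def ColorAdj (G : V → V → C) (S : Set V) (c : C) (x y : V) : Prop :=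
  x ∈ S ∧ y ∈ S ∧ G x y = c

def ColorReach (G : V → V → C) (S : Set V) (c : C) : V → V → Prop :=
  Relation.ReflTransGen (ColorAdj G S c)

variable {G : V → V → C} {S T A : Set V} {c : C} {v x y : V}

theorem ColorReach.symm (hG : ∀ x y, G x y = G y x) (h : ColorReach G S c x y) :
    ColorReach G S c y x := by
  induction h with
  | refl => exact .refl
  | tail _ hyz ih => exact .head ⟨hyz.2.1, hyz.1, (hG _ _).trans hyz.2.2⟩ ih

theorem ColorReach.mem (h : ColorReach G S c x y) (hx : x ∈ S) : y ∈ S := by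
  induction h with
  | refl => exact hx
  | tail _ hyz _ => exact hyz.2.1

theorem ColorReach.mem_of_closed (hA : ∀ y ∈ A, ∀ z, ColorAdj G S c y z → z ∈ A)
    (h : ColorReach G S c x y) (hx : x ∈ A) : y ∈ A := by
  induction h with
  | refl => exact hx
  | tail _ hyz ih => exact hA _ ih _ hyz

theorem color_ne_of_not_colorReach (h : ¬ ColorReach G S c x y) (hx : x ∈ S) (hy : y ∈ S) :
    G x y ≠ c :=
  fun hc => h (.single ⟨hx, hy, hc⟩)

theorem ColorReach.exists_adj_of_insert (h : ColorReach G (insert v T) c y v) (hv : v ∉ T)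
    (hy : y ∈ T) : ∃ s ∈ T, G s v = c ∧ ColorReach G T c y s := by
  induction h using Relation.ReflTransGen.head_induction_on with
  | refl => exact absurd hy hv
  | @head a w haw _ ih =>
    obtain ⟨-, hw, hc⟩ := haw
    rcases hw with rfl | hw
    · exact ⟨a, hy, hc, .refl⟩
    · obtain ⟨s, hs, hsv, hws⟩ := ih hw
      exact ⟨s, hs, hsv, .head ⟨hy, hw, hc⟩ hws⟩

def colorSetoid (hG : ∀ x y, G x y = G y x) (c : C) : Setoid V where
  r := ColorReach G Set.univ c
  iseqv := ⟨fun _ => .refl, (·.symm hG), .trans⟩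

noncomputable def colorPartition [Fintype V] [DecidableEq V] (hG : ∀ x y, G x y = G y x)
    (c : C) : Finpartition (univ : Finset V) :=
  @Finpartition.ofSetoid _ _ _ (colorSetoid hG c) (Classical.decRel _)

variable [Fintype V] [DecidableEq V] {hG : ∀ x y, G x y = G y x} {X Y : Finset V}

theorem mem_colorPartition_part :
    y ∈ (colorPartition hG c).part x ↔ ColorReach G Set.univ c x y := by
  classical
  exact Finpartition.mem_part_ofSetoid_iff_rel

theorem colorReach_of_mem_parts (hX : X ∈ (colorPartition hG c).parts) (hx : x ∈ X)
    (hy : y ∈ X) : ColorReach G Set.univ c x y := by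
  rwa [← mem_colorPartition_part (hG := hG), Finpartition.part_eq_of_mem _ hX hx]

theorem not_colorReach_of_mem_parts (hX : X ∈ (colorPartition hG c).parts)
    (hY : Y ∈ (colorPartition hG c).parts) (hXY : X ≠ Y) (hx : x ∈ X) (hy : y ∈ Y) :
    ¬ ColorReach G Set.univ c x y := by
  rw [← mem_colorPartition_part (hG := hG), Finpartition.part_eq_of_mem _ hX hx]
  exact fun hyX =>
    hXY (Finpartition.part_eq_of_mem _ hX hyX ▸ Finpartition.part_eq_of_mem _ hY hy)

theorem two_le_card_colorPartition (h : ¬ ColorReach G Set.univ c x y) :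
    2 ≤ #(colorPartition hG c).parts := by
  refine one_lt_card.mpr ⟨_, (colorPartition hG c).part_mem.mpr (mem_univ x),
    _, (colorPartition hG c).part_mem.mpr (mem_univ y), fun hxy => h ?_⟩
  rw [← mem_colorPartition_part (hG := hG), hxy]
  exact (colorPartition hG c).mem_part_self.mpr (mem_univ y)

end ColorReach

section RainbowFree

variable {n : ℕ} {G : Fin n → Fin n → Fin 3} {S T : Set (Fin n)} {b c : Fin 3}
  {u u₀ v p q x x' y y' : Fin n}

theorem exists_ne_ne_fin_three : ∀ a b : Fin 3, ∃ d, d ≠ a ∧ d ≠ b := by decide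

theorem eq_add_one_or_eq_add_two_fin_three :
    ∀ c d : Fin 3, d ≠ c → d = c + 1 ∨ d = c + 2 := by
  decide

theorem color_eq_of_colorReach_left (hrb : ∀ u v w, ¬ IsRainbow G u v w)
    (hxx' : ColorReach G S c x x') (hxy : ¬ ColorReach G S c x y) (hy : y ∈ S) :
    G x' y = G x y := by
  induction hxx' with
  | refl => rfl
  | @tail u u' hxu huu' ih =>
    obtain ⟨hu, hu', hc⟩ := huu'
    have huy : ¬ ColorReach G S c u y := fun h => hxy (hxu.trans h)
    have hu'y : ¬ ColorReach G S c u' y := fun h => hxy ((hxu.tail ⟨hu, hu', hc⟩).trans h)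
    have key : G u' y = G u y := by
      by_contra hne
      refine hrb u u' y ⟨fun h => hne (h ▸ rfl), fun h => huy (h ▸ .refl),
        fun h => hu'y (h ▸ .refl), ?_, ?_, fun h => hne h.symm⟩
      · rw [hc]; exact (color_ne_of_not_colorReach huy hu hy).symm
      · rw [hc]; exact (color_ne_of_not_colorReach hu'y hu' hy).symm
    exact key.trans ih

theorem color_eq_of_colorReach (hG : IsColoring G) (hrb : ∀ u v w, ¬ IsRainbow G u v w)
    (hxx' : ColorReach G S c x x') (hyy' : ColorReach G S c y y')
    (hxy : ¬ ColorReach G S c x y) (hx : x ∈ S) (hy : y ∈ S) : G x' y' = G x y :=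
  calc G x' y' = G y' x' := hG _ _
    _ = G y x' := color_eq_of_colorReach_left hrb hyy'
      (fun h => hxy (hxx'.trans (h.symm hG))) (hxx'.mem hx)
    _ = G x' y := hG _ _
    _ = G x y := color_eq_of_colorReach_left hrb hxx' hxy hy

theorem not_colorReach_insert_of_forall_color_eq (hv : v ∉ T) (hvT : ∀ w ∈ T, G v w = c)
    (hb : b ≠ c) (hp : p ∈ T) : ¬ ColorReach G (insert v T) b v p := by
  have hclosed : ∀ y ∈ ({v} : Set (Fin n)), ∀ z, ColorAdj G (insert v T) b y z → z = v := by
    rintro y rfl z ⟨-, hz | hz, hyz⟩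
    · exact hz
    · exact absurd (hyz.symm.trans (hvT z hz)) hb
  intro h
  exact hv (Set.mem_singleton_iff.mp (h.mem_of_closed hclosed rfl) ▸ hp)

theorem color_eq_of_not_colorReach_of_nbr (hG : IsColoring G)
    (hrb : ∀ u v w, ¬ IsRainbow G u v w) (hv : v ∉ T)
    (hnbr : ∀ y ∈ T, ∃ s ∈ T, G s v = c ∧ ColorReach G T c y s) (hu₀ : u₀ ∈ T)
    (hγ : G v u₀ ≠ c) (hu : ColorReach G T c u₀ u) (hy : y ∈ T)
    (hyu : ¬ ColorReach G T c u₀ y) : G u y = G v u₀ := by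
  obtain ⟨s, hs, hsv, hys⟩ := hnbr y hy
  have hsu : ¬ ColorReach G T c u₀ s := fun h => hyu (h.trans (hys.symm hG))
  have hsu₀ : G s u₀ = G v u₀ := by
    by_contra hne
    refine hrb v s u₀ ⟨fun h => hv (h ▸ hs), fun h => hv (h ▸ hu₀),
      fun h => hsu (h ▸ .refl), ?_, ?_, fun h => hne h.symm⟩
    · rw [hG, hsv]; exact hγ.symm
    · rw [hG, hsv]
      exact (color_ne_of_not_colorReach (fun h => hsu (h.symm hG)) hs hu₀).symm
  calc G u y = G u₀ s := color_eq_of_colorReach hG hrb hu (hys.symm hG) hsu hu₀ hs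
    _ = G s u₀ := hG _ _
    _ = G v u₀ := hsu₀

theorem not_colorReach_insert_of_ne_of_ne (hG : IsColoring G)
    (hrb : ∀ u v w, ¬ IsRainbow G u v w) (hv : v ∉ T)
    (hnbr : ∀ y ∈ T, ∃ s ∈ T, G s v = c ∧ ColorReach G T c y s) (hu₀ : u₀ ∈ T)
    (hγ : G v u₀ ≠ c) (hy : y ∈ T) (hyu : ¬ ColorReach G T c u₀ y) (hbc : b ≠ c)
    (hbγ : b ≠ G v u₀) : ¬ ColorReach G (insert v T) b u₀ v := by
  have hfar : ∀ {u y}, ColorReach G T c u₀ u → y ∈ T → ¬ ColorReach G T c u₀ y →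
      G u y = G v u₀ :=
    color_eq_of_not_colorReach_of_nbr hG hrb hv hnbr hu₀ hγ
  obtain ⟨s, hs, hsv, hys⟩ := hnbr y hy
  have hsu : ¬ ColorReach G T c u₀ s := fun h => hyu (h.trans (hys.symm hG))
  have hclosed : ∀ u ∈ {u | ColorReach G T c u₀ u}, ∀ w,
      ColorAdj G (insert v T) b u w → w ∈ {u | ColorReach G T c u₀ u} := by
    rintro u (hu : ColorReach G T c u₀ u) w ⟨-, hw | hw, hb⟩
    · -- `v`, `s`, `u` would be a rainbow triangle with colors `c`, `b`, `γ`
      rw [hw] at hb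
      have hus : G s u = G v u₀ := (hG s u).trans (hfar hu hs hsu)
      exact (hrb v s u ⟨fun h => hv (h ▸ hs), fun h => hv (h ▸ hu.mem hu₀),
        fun h => hsu (h ▸ hu), by rw [hG, hsv, ← hG, hb]; exact hbc.symm,
        by rw [hG, hsv, hus]; exact hγ.symm, by rw [hG, hb, hus]; exact hbγ⟩).elim
    · by_contra hwu
      exact hbγ (hb.symm.trans (hfar hu hw hwu))
  exact fun h => hv (ColorReach.mem (h.mem_of_closed hclosed .refl) hu₀)

theorem exists_not_colorReach_insert (hG : IsColoring G) (hrb : ∀ u v w, ¬ IsRainbow G u v w)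
    (hv : v ∉ T) (hp : p ∈ T) (hq : q ∈ T) (hpq : ¬ ColorReach G T c p q) :
    ∃ b, ∃ x ∈ insert v T, ∃ y ∈ insert v T, ¬ ColorReach G (insert v T) b x y := by
  by_cases hconn : ∀ y ∈ T, ColorReach G (insert v T) c y v
  swap
  · push Not at hconn
    obtain ⟨y, hy, h⟩ := hconn
    exact ⟨c, y, .inr hy, v, .inl rfl, h⟩
  have hnbr := fun y hy => (hconn y hy).exists_adj_of_insert hv hy
  by_cases hmono : ∀ w ∈ T, G v w = c
  · obtain ⟨b, hb, -⟩ := exists_ne_ne_fin_three c c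
    exact ⟨b, v, .inl rfl, p, .inr hp, not_colorReach_insert_of_forall_color_eq hv hmono hb hp⟩
  push Not at hmono
  obtain ⟨u₀, hu₀, hγ⟩ := hmono
  obtain ⟨y₀, hy₀, hy₀u₀⟩ : ∃ y₀ ∈ T, ¬ ColorReach G T c u₀ y₀ := by
    by_contra! h
    exact hpq (((h p hp).symm hG).trans (h q hq))
  obtain ⟨b, hbc, hbγ⟩ := exists_ne_ne_fin_three c (G v u₀)
  exact ⟨b, u₀, .inr hu₀, v, .inl rfl,
    not_colorReach_insert_of_ne_of_ne hG hrb hv hnbr hu₀ hγ hy₀ hy₀u₀ hbc hbγ⟩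

theorem exists_not_colorReach (hG : IsColoring G) (hrb : ∀ u v w, ¬ IsRainbow G u v w)
    (S : Finset (Fin n)) (hS : 2 ≤ #S) :
    ∃ c, ∃ x ∈ S, ∃ y ∈ S, ¬ ColorReach G S c x y := by
  induction S using Finset.induction_on with
  | empty => simp at hS
  | @insert v T hv ih =>
    rw [card_insert_of_notMem hv] at hS
    rcases le_or_gt 2 #T with hT | hT
    · obtain ⟨c, p, hp, q, hq, hpq⟩ := ih hT
      simpa using exists_not_colorReach_insert hG hrb (mem_coe.not.mpr hv) hp hq hpq
    · obtain ⟨w, rfl⟩ := card_eq_one.mp (by omega : #T = 1)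
      obtain ⟨b, hb, -⟩ := exists_ne_ne_fin_three (G v w) (G v w)
      refine ⟨b, v, mem_insert_self v _, w, mem_insert_of_mem (mem_singleton_self w), ?_⟩
      rw [coe_insert]
      exact not_colorReach_insert_of_forall_color_eq (mem_coe.not.mpr hv) (by simp) hb (by simp)

theorem isMonoPartition_colorPartition (hG : IsColoring G) (hrb : ∀ u v w, ¬ IsRainbow G u v w)
    (c : Fin 3) : IsMonoPartition G (c + 1) (c + 2) (colorPartition hG c) := by
  intro X hX Y hY hXY
  obtain ⟨x, hx⟩ := (colorPartition hG c).nonempty_of_mem_parts hX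
  obtain ⟨y, hy⟩ := (colorPartition hG c).nonempty_of_mem_parts hY
  have hxy := not_colorReach_of_mem_parts hX hY hXY hx hy
  refine ⟨G x y, eq_add_one_or_eq_add_two_fin_three c _
    (color_ne_of_not_colorReach hxy trivial trivial), fun x' hx' y' hy' => ?_⟩
  exact color_eq_of_colorReach hG hrb (colorReach_of_mem_parts hX hx hx')
    (colorReach_of_mem_parts hY hy hy') hxy trivial trivial

end RainbowFree

/-- **Gallai.** A 3-colored complete graph on at least 2 vertices with no
rainbow triangles admits an `(a,b)`-monochromatic partition with at least two parts,
for some two distinct colors `a, b`. -/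
theorem gallai_partition {n : ℕ} (hn : 2 ≤ n) (G : Fin n → Fin n → Fin 3)
    (hG : IsColoring G) (hrb : ∀ u v w : Fin n, ¬ IsRainbow G u v w) :
    ∃ a b : Fin 3, a ≠ b ∧ ∃ P : Finpartition (Finset.univ : Finset (Fin n)),
      2 ≤ P.parts.card ∧ IsMonoPartition G a b P := by
  obtain ⟨c, x, -, y, -, hxy⟩ := exists_not_colorReach hG hrb univ (by simpa using hn)
  exact ⟨c + 1, c + 2, by simp, colorPartition hG c,
    two_le_card_colorPartition (by simpa using hxy), isMonoPartition_colorPartition hG hrb c⟩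
end

section
/- Let G be a 3-colored complete graph, let a, b ∈ {1,2,3} be colors, and let P be an (a,b)-monochromatic partition of V(G). If for every part X of P the restriction of G to X contains no rainbow triangle, then G contains no rainbow triangle. -/
/-!
Two edges joining a vertex to a part it does not lie in have the same colour, so a rainbow
triangle cannot have exactly two vertices in one part. Nor can it lie inside one part, by
hypothesis. Its three vertices would then lie in three different parts, and its three edges
would take pairwise distinct colours among only the two colours `a` and `b`.
-/

section Rainbow

variable {n : ℕ} {G : Fin n → Fin n → Fin 3} {u v w : Fin n}

theorem IsRainbow.swap_left (hG : IsColoring G) (h : IsRainbow G u v w) :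
    IsRainbow G v u w := by
  obtain ⟨huv, huw, hvw, h₁, h₂, h₃⟩ := h
  unfold IsRainbow
  rw [hG v u]
  exact ⟨huv.symm, hvw, huw, h₂, h₁, h₃.symm⟩

theorem IsRainbow.swap_right (hG : IsColoring G) (h : IsRainbow G u v w) :
    IsRainbow G u w v := by
  obtain ⟨huv, huw, hvw, h₁, h₂, h₃⟩ := h
  unfold IsRainbow
  rw [hG w v]
  exact ⟨huw, huv, hvw.symm, h₁.symm, h₃, h₂⟩

end Rainbow

theorem not_pairwise_ne_of_mem_pair {α : Type*} {a b x y z : α}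
    (hx : x = a ∨ x = b) (hy : y = a ∨ y = b) (hz : z = a ∨ z = b) :
    ¬ (x ≠ y ∧ x ≠ z ∧ y ≠ z) := by
  rcases hx with rfl | rfl <;> rcases hy with rfl | rfl <;> rcases hz with rfl | rfl <;> simp

namespace IsMonoPartition

variable {n : ℕ} {G : Fin n → Fin n → Fin 3} {a b : Fin 3}
  {P : Finpartition (Finset.univ : Finset (Fin n))}

theorem color_eq_a_or_b (hP : IsMonoPartition G a b P) {x y : Fin n}
    (hxy : P.part x ≠ P.part y) : G x y = a ∨ G x y = b := by
  obtain ⟨c, hc, hcol⟩ := hP _ (P.part_mem.2 (Finset.mem_univ x)) _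
    (P.part_mem.2 (Finset.mem_univ y)) hxy
  rw [hcol x (P.mem_part_self.2 (Finset.mem_univ x)) y (P.mem_part_self.2 (Finset.mem_univ y))]
  exact hc

theorem color_eq_of_part_eq (hP : IsMonoPartition G a b P) {u v w : Fin n}
    (huv : P.part u ≠ P.part v) (hvw : P.part v = P.part w) : G u v = G u w := by
  obtain ⟨c, -, hcol⟩ := hP _ (P.part_mem.2 (Finset.mem_univ u)) _
    (P.part_mem.2 (Finset.mem_univ v)) huv
  have hw : w ∈ P.part v := hvw ▸ P.mem_part_self.2 (Finset.mem_univ w)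
  have hu := P.mem_part_self.2 (Finset.mem_univ u)
  rw [hcol u hu v (P.mem_part_self.2 (Finset.mem_univ v)), hcol u hu w hw]

theorem not_isRainbow_of_part_eq (hP : IsMonoPartition G a b P) {u v w : Fin n}
    (huv : P.part u ≠ P.part v) (hvw : P.part v = P.part w) : ¬ IsRainbow G u v w :=
  fun h ↦ h.2.2.2.1 (hP.color_eq_of_part_eq huv hvw)

theorem not_isRainbow_of_part_ne (hP : IsMonoPartition G a b P) {u v w : Fin n}
    (huv : P.part u ≠ P.part v) (huw : P.part u ≠ P.part w) (hvw : P.part v ≠ P.part w) :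
    ¬ IsRainbow G u v w :=
  fun h ↦ not_pairwise_ne_of_mem_pair (hP.color_eq_a_or_b huv) (hP.color_eq_a_or_b huw)
    (hP.color_eq_a_or_b hvw) h.2.2.2

end IsMonoPartition

/-- If `P` is an `(a,b)`-monochromatic partition of a 3-colored
complete graph `G`, and the restriction of `G` to each part of `P` has no rainbow
triangle, then `G` has no rainbow triangle. -/
theorem gallai_partition_converse {n : ℕ} (G : Fin n → Fin n → Fin 3)
    (hG : IsColoring G) (a b : Fin 3)
    (P : Finpartition (Finset.univ : Finset (Fin n)))
    (hP : IsMonoPartition G a b P)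
    (hparts : ∀ X ∈ P.parts, ∀ u ∈ X, ∀ v ∈ X, ∀ w ∈ X, ¬ IsRainbow G u v w) :
    ∀ u v w : Fin n, ¬ IsRainbow G u v w := by
  intro u v w h
  have mem_part (x : Fin n) : x ∈ P.part x := P.mem_part_self.2 (Finset.mem_univ x)
  by_cases hvw : P.part v = P.part w
  · by_cases huv : P.part u = P.part v
    · exact hparts _ (P.part_mem.2 (Finset.mem_univ u)) u (mem_part u) v (huv ▸ mem_part v)
        w (huv ▸ hvw ▸ mem_part w) h
    · exact hP.not_isRainbow_of_part_eq huv hvw h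
  · by_cases huv : P.part u = P.part v
    · exact hP.not_isRainbow_of_part_eq (huv ▸ Ne.symm hvw) huv
        ((h.swap_right hG).swap_left hG)
    · by_cases huw : P.part u = P.part w
      · exact hP.not_isRainbow_of_part_eq (Ne.symm huv) huw (h.swap_left hG)
      · exact hP.not_isRainbow_of_part_ne huv huw hvw h
end

section
/- For all integers d ≥ 2 and r ≥ 2d, there exists a collection R of d-tuples with entries in {1,…,r} such that |R| ≥ (r/2)² and any two distinct d-tuples in R agree in at most one coordinate. -/
/-!
Take a prime `p` with `r / 2 < p ≤ r` (Bertrand) and read the tuples off the affine lines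
`i ↦ a + b i` over `𝔽_p`, evaluated at `d ≤ p` distinct points and written into
`{1, …, r}` by an injection `𝔽_p ↪ Fin r`. Two distinct lines meet in at most one point, so
distinct tuples agree in at most one coordinate, and there are `p² ≥ (r / 2)²` of them.
-/

open Finset

theorem eq_of_affine_eq_of_ne {F : Type*} [Field F] {a b a' b' x y : F} (hxy : x ≠ y)
    (hx : a + b * x = a' + b' * x) (hy : a + b * y = a' + b' * y) : a = a' ∧ b = b' := by
  have hb : (b - b') * (x - y) = 0 := by linear_combination hx - hy
  have hb : b = b' := sub_eq_zero.1 ((mul_eq_zero.1 hb).resolve_right (sub_ne_zero.2 hxy))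
  subst hb
  exact ⟨add_right_cancel hx, rfl⟩

section AffineCode

variable {F ι α : Type*} [Field F] [Fintype ι]

def affineCode [Fintype F] [DecidableEq α] (pt : ι ↪ F) (e : F ↪ α) : Finset (ι → α) :=
  univ.image fun ab : F × F => fun i => e (ab.1 + ab.2 * pt i)

theorem affineCode_injective (pt : ι ↪ F) (e : F ↪ α) (hι : 2 ≤ Fintype.card ι) :
    Function.Injective fun ab : F × F => fun i => e (ab.1 + ab.2 * pt i) := by
  rintro ⟨a, b⟩ ⟨a', b'⟩ h
  obtain ⟨i, j, hij⟩ := Fintype.exists_pair_of_one_lt_card hι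
  have agree : ∀ k, a + b * pt k = a' + b' * pt k := fun k => e.injective (congrFun h k)
  obtain ⟨rfl, rfl⟩ := eq_of_affine_eq_of_ne (pt.injective.ne hij) (agree i) (agree j)
  rfl

theorem card_affineCode [Fintype F] [DecidableEq α] (pt : ι ↪ F) (e : F ↪ α)
    (hι : 2 ≤ Fintype.card ι) :
    (affineCode pt e).card = Fintype.card F ^ 2 := by
  rw [affineCode, card_image_of_injective _ (affineCode_injective pt e hι), card_univ,
    Fintype.card_prod, sq]

theorem card_filter_eq_le_one_of_mem_affineCode [Fintype F] [DecidableEq α] (pt : ι ↪ F)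
    (e : F ↪ α) {x y : ι → α} (hx : x ∈ affineCode pt e) (hy : y ∈ affineCode pt e)
    (hxy : x ≠ y) :
    (univ.filter fun i => x i = y i).card ≤ 1 := by
  obtain ⟨⟨a, b⟩, -, rfl⟩ := mem_image.1 hx
  obtain ⟨⟨a', b'⟩, -, rfl⟩ := mem_image.1 hy
  refine card_le_one.2 fun i hi j hj => ?_
  by_contra hij
  have agree : ∀ k ∈ univ.filter fun k => e (a + b * pt k) = e (a' + b' * pt k),
      a + b * pt k = a' + b' * pt k := fun k hk => e.injective (mem_filter.1 hk).2
  obtain ⟨rfl, rfl⟩ := eq_of_affine_eq_of_ne (pt.injective.ne hij) (agree i hi) (agree j hj)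
  exact hxy rfl

end AffineCode

theorem exists_prime_half_lt_le {r : ℕ} (hr : 2 ≤ r) :
    ∃ p, p.Prime ∧ r / 2 < p ∧ p ≤ r := by
  obtain ⟨p, hp, hlt, hle⟩ := Nat.exists_prime_lt_and_le_two_mul (r / 2) (by omega)
  exact ⟨p, hp, hlt, by omega⟩

/-- For `d ≥ 2` and `r ≥ 2d` there is a family `R` of `d`-tuples with
entries in a set of `r` elements such that `|R| ≥ (r/2)²` and any two distinct tuples
in `R` agree in at most one coordinate. -/
theorem design_exists (d r : ℕ) (hd : 2 ≤ d) (hr : 2 * d ≤ r) :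
    ∃ R : Finset (Fin d → Fin r), ((r : ℝ) / 2) ^ 2 ≤ (R.card : ℝ) ∧
      ∀ x ∈ R, ∀ y ∈ R, x ≠ y →
        (Finset.univ.filter (fun i : Fin d => x i = y i)).card ≤ 1 := by
  obtain ⟨p, hp, hrp, hpr⟩ := exists_prime_half_lt_le (r := r) (by omega)
  have : Fact p.Prime := ⟨hp⟩
  let pt : Fin d ↪ ZMod p := (Fin.castLEEmb (by omega)).trans (ZMod.finEquiv p).toEmbedding
  let e : ZMod p ↪ Fin r := (ZMod.finEquiv p).symm.toEmbedding.trans (Fin.castLEEmb hpr)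
  refine ⟨affineCode pt e, ?_, fun x hx y hy =>
    card_filter_eq_le_one_of_mem_affineCode pt e hx hy⟩
  rw [card_affineCode pt e (by simpa using hd), ZMod.card]
  have hhalf : (r : ℝ) / 2 ≤ p := by
    rw [div_le_iff₀ two_pos]
    exact_mod_cast (show r ≤ p * 2 by omega)
  push_cast
  gcongr
end
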